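/- Let α be a real number with α ∉ ℤ and A = (a_{nk}) an infinite real matrix. Then A maps c₀(Δ^(α)) into ℓ∞ (i.e., for every x with (Δ^(α)x)_n → 0 the series A_n x = ∑_k a_{nk} x_k converge and (A_n x)_n is bounded) if and only if the series defining â_{nk} and w^{(A_n)}_{mk} converge and the conditions sup_n ∑_{k=0}^∞ |â_{nk}| < ∞ and, for every n, sup_m ∑_{k=0}^{m} |w^{(A_n)}_{mk}| < ∞ hold, where â_{nk} = ∑_{j=k}^∞ (−1)^{j−k} Γ(−α+1)/((j−k)!·Γ(−α−j+k+1)) a_{nj} and w^{(A_n)}_{mk} = ∑_{j=m}^∞ (−1)^{j−k} Γ(−α+1)/((j−k)!·Γ(−α−j+k+1)) a_{nj} for 0 ≤ k ≤ m. -/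

import Mathlib

open Filter Finset Topology

/-- The fractional difference matrix `Δ^(α)`. -/
noncomputable def fracDelta (α : ℝ) (n k : ℕ) : ℝ :=
  if k ≤ n then
    (-1 : ℝ) ^ (n - k) * Real.Gamma (α + 1) /
      ((Nat.factorial (n - k) : ℝ) * Real.Gamma (α - n + k + 1))
  else 0

/-- `(Δ^(α)x)_n = ∑_{k=0}^n Δ^(α)_{nk} x_k`. -/
noncomputable def fracDeltaSeq (α : ℝ) (x : ℕ → ℝ) (n : ℕ) : ℝ :=
  ∑ k ∈ Finset.range (n + 1), fracDelta α n k * x k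

/-- Membership in `c₀(Δ^(α))`. -/
def memC0Delta (α : ℝ) (x : ℕ → ℝ) : Prop :=
  Tendsto (fracDeltaSeq α x) atTop (nhds 0)

/-- Classical convergence of the series `∑_{j=0}^∞ f j` to `L`. -/
def SeriesHasSum (f : ℕ → ℝ) (L : ℝ) : Prop :=
  Tendsto (fun m => ∑ j ∈ Finset.range m, f j) atTop (nhds L)

/-!
`Δ^(α)` and `Δ^(-α)` are mutually inverse lower-triangular matrices (Chu–Vandermonde for the
binomial coefficients of `α` and `-α`), so `y = Δ^(α) x` identifies `c₀(Δ^(α))` with `c₀`, and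
regrouping gives `∑_{k<m} a_{nk} x_k = ∑_{j<m} (∑_{i<m} Δ^(-α)_{ij} a_{ni}) y_j`.

If the conditions hold, the inner coefficient is `â_{nj} - w^{(A_n)}_{mj}`: the `â`-part is an
absolutely convergent series bounded by `sup_n ∑_k |â_{nk}| · ‖y‖_∞`, and the `w`-part tends to `0`
by a Toeplitz estimate. Conversely, the partial sums of each row are continuous functionals on `c₀`
converging pointwise; Banach–Steinhaus bounds them uniformly in `m`, makes their limits continuous
and bounds those uniformly in `n`, and the `ℓ¹`-norm of the coefficients of a functional on `c₀`
is at most its operator norm.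
-/

open Polynomial in
lemma Real.Gamma_add_one_eq_descPochhammer_mul {β : ℝ} (hβ : ∀ m : ℤ, β ≠ m) (r : ℕ) :
    Real.Gamma (β + 1) = (descPochhammer ℤ r).smeval β * Real.Gamma (β - r + 1) := by
  induction r with
  | zero => simp [smeval_one]
  | succ r ih =>
    have hβr : β - r ≠ 0 := sub_ne_zero.mpr (by exact_mod_cast hβ r)
    rw [ih, Real.Gamma_add_one hβr, descPochhammer_succ_right, smeval_mul,
      show β - (r + 1 : ℕ) + 1 = β - r by push_cast; ring]
    simp only [smeval_sub, smeval_X, smeval_natCast, pow_one, pow_zero, nsmul_eq_mul, mul_one]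
    ring

lemma neg_ne_intCast_of_forall {β : ℝ} (hβ : ∀ m : ℤ, β ≠ m) (m : ℤ) : -β ≠ m :=
  fun h => hβ (-m) (by push_cast; linarith)

lemma fracDelta_of_lt (β : ℝ) {n k : ℕ} (h : n < k) : fracDelta β n k = 0 :=
  if_neg (by omega)

lemma fracDelta_of_le {β : ℝ} (hβ : ∀ m : ℤ, β ≠ m) {n k : ℕ} (h : k ≤ n) :
    fracDelta β n k = (-1) ^ (n - k) * Ring.choose β (n - k) := by
  have hidx : β - n + k + 1 = β - (n - k : ℕ) + 1 := by push_cast [h]; ring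
  have hΓ : Real.Gamma (β - (n - k : ℕ) + 1) ≠ 0 :=
    Real.Gamma_ne_zero fun m hm => hβ ((n - k : ℕ) - m - 1) (by push_cast; linarith)
  rw [fracDelta, if_pos h, hidx, Real.Gamma_add_one_eq_descPochhammer_mul hβ (n - k),
    Ring.descPochhammer_eq_factorial_smul_choose, nsmul_eq_mul]
  field_simp

lemma sum_choose_neg_mul_choose (β : ℝ) (p : ℕ) :
    ∑ i ∈ range (p + 1), Ring.choose (-β) i * Ring.choose β (p - i) = if p = 0 then 1 else 0 := by
  have h := Ring.add_choose_eq (r := -β) (s := β) p (Commute.all _ _)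
  rwa [neg_add_cancel, Ring.choose_zero_ite, Finset.Nat.sum_antidiagonal_eq_sum_range_succ
    (fun i j => Ring.choose (-β) i * Ring.choose β j), eq_comm] at h

lemma sum_fracDelta_mul_fracDelta_neg {β : ℝ} (hβ : ∀ m : ℤ, β ≠ m) (n j : ℕ) :
    ∑ k ∈ range (n + 1), fracDelta β n k * fracDelta (-β) k j = if n = j then 1 else 0 := by
  rcases lt_or_ge n j with hnj | hjn
  · rw [if_neg hnj.ne]
    exact sum_eq_zero fun k hk => by
      rw [fracDelta_of_lt (-β) (by simp at hk; omega), mul_zero]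
  obtain ⟨p, rfl⟩ := Nat.exists_eq_add_of_le hjn
  have hterm : ∀ i ∈ range (p + 1), fracDelta β (j + p) (j + i) * fracDelta (-β) (j + i) j
      = (-1) ^ p * (Ring.choose (-β) i * Ring.choose β (p - i)) := by
    intro i hi
    have hip : i ≤ p := Nat.lt_succ_iff.mp (mem_range.mp hi)
    rw [fracDelta_of_le hβ (by omega), fracDelta_of_le (neg_ne_intCast_of_forall hβ) (by omega),
      Nat.add_sub_add_left, Nat.add_sub_cancel_left, ← pow_sub_mul_pow (-1 : ℝ) hip]
    ring
  rw [show j + p + 1 = j + (p + 1) by ring, sum_range_add,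
    sum_eq_zero fun k hk => by rw [fracDelta_of_lt (-β) (mem_range.mp hk), mul_zero],
    zero_add, sum_congr rfl hterm, ← mul_sum, sum_choose_neg_mul_choose]
  by_cases hp : p = 0 <;> simp [hp]

lemma sum_mul_sum_range_succ_of_lower {R : Type*} [CommSemiring R] {D : ℕ → ℕ → R}
    (hD : ∀ {k j}, k < j → D k j = 0) (c y : ℕ → R) (m : ℕ) :
    ∑ k ∈ range m, c k * ∑ j ∈ range (k + 1), D k j * y j
      = ∑ j ∈ range m, (∑ k ∈ range m, D k j * c k) * y j := by
  have hextend : ∀ k ∈ range m,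
      ∑ j ∈ range (k + 1), D k j * y j = ∑ j ∈ range m, D k j * y j := fun k hk =>
    sum_subset (range_subset_range.mpr (mem_range.mp hk)) fun j _ hj => by
      rw [hD (by simpa using hj), zero_mul]
  rw [sum_congr rfl fun k hk => by rw [hextend k hk]]
  simp only [mul_sum, sum_mul]
  rw [sum_comm]
  exact sum_congr rfl fun _ _ => sum_congr rfl fun _ _ => by ring

lemma fracDeltaSeq_fracDeltaSeq_neg {β : ℝ} (hβ : ∀ m : ℤ, β ≠ m) (y : ℕ → ℝ) :
    fracDeltaSeq β (fracDeltaSeq (-β) y) = y := by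
  ext n
  simp only [fracDeltaSeq]
  rw [sum_mul_sum_range_succ_of_lower (fracDelta_of_lt _)]
  simp_rw [mul_comm (fracDelta (-β) _ _), sum_fracDelta_mul_fracDelta_neg hβ, ite_mul, one_mul,
    zero_mul, sum_ite_eq, mem_range, Nat.lt_succ_self, if_true]

lemma fracDeltaSeq_neg_fracDeltaSeq {β : ℝ} (hβ : ∀ m : ℤ, β ≠ m) (x : ℕ → ℝ) :
    fracDeltaSeq (-β) (fracDeltaSeq β x) = x := by
  simpa using fracDeltaSeq_fracDeltaSeq_neg (neg_ne_intCast_of_forall hβ) x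

lemma memC0Delta_fracDeltaSeq_neg {α : ℝ} (hα : ∀ m : ℤ, α ≠ m) {y : ℕ → ℝ}
    (hy : Tendsto y atTop (𝓝 0)) : memC0Delta α (fracDeltaSeq (-α) y) := by
  rwa [memC0Delta, fracDeltaSeq_fracDeltaSeq_neg hα]

/-- For `a = a_n`, the partial sums of the series defining `â_{nk}`; the tail
`w^{(A_n)}_{mk}` of that series is `â_{nk} - hatPartialSum α a_n k m`. -/
noncomputable def hatPartialSum (α : ℝ) (a : ℕ → ℝ) (k m : ℕ) : ℝ :=
  ∑ j ∈ range m, fracDelta (-α) j k * a j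

lemma hatPartialSum_of_le (α : ℝ) (a : ℕ → ℝ) {k m : ℕ} (h : m ≤ k) : hatPartialSum α a k m = 0 :=
  sum_eq_zero fun j hj => by rw [fracDelta_of_lt _ (by simp at hj; omega), zero_mul]

lemma sum_mul_fracDeltaSeq_neg (α : ℝ) (a y : ℕ → ℝ) (m : ℕ) :
    ∑ k ∈ range m, a k * fracDeltaSeq (-α) y k = ∑ j ∈ range m, hatPartialSum α a j m * y j :=
  sum_mul_sum_range_succ_of_lower (fracDelta_of_lt _) a y m

lemma seriesHasSum_nat_add_iff {f : ℕ → ℝ} {L : ℝ} (m : ℕ) :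
    SeriesHasSum (fun j => f (m + j)) L ↔ SeriesHasSum f (L + ∑ j ∈ range m, f j) := by
  have hpartial : ∀ p, ∑ j ∈ range p, f (m + j)
      = ∑ j ∈ range (p + m), f j - ∑ j ∈ range m, f j := fun p => by
    rw [add_comm p m, sum_range_add, add_sub_cancel_left]
  simp only [SeriesHasSum, hpartial]
  rw [← tendsto_add_atTop_iff_nat m (f := fun p => ∑ j ∈ range p, f j)]
  conv_rhs => rw [← tendsto_sub_const_iff (∑ j ∈ range m, f j), add_sub_cancel_right]

lemma seriesHasSum_w_iff (α : ℝ) (a : ℕ → ℝ) {L : ℝ} (k m : ℕ) :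
    SeriesHasSum (fun j => fracDelta (-α) (m + j) k * a (m + j)) L ↔
      Tendsto (hatPartialSum α a k) atTop (𝓝 (L + hatPartialSum α a k m)) :=
  seriesHasSum_nat_add_iff (f := fun j => fracDelta (-α) j k * a j) m

lemma seriesHasSum_hat_iff (α : ℝ) (a : ℕ → ℝ) {L : ℝ} (k : ℕ) :
    SeriesHasSum (fun j => fracDelta (-α) (k + j) k * a (k + j)) L ↔
      Tendsto (hatPartialSum α a k) atTop (𝓝 L) := by
  rw [seriesHasSum_w_iff, hatPartialSum_of_le α a le_rfl, add_zero]

namespace ZeroAtInftyContinuousMap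

open ZeroAtInfty

section Norm

variable {X E : Type*} [TopologicalSpace X] [NormedAddCommGroup E]

lemma norm_apply_le (f : C₀(X, E)) (x : X) : ‖f x‖ ≤ ‖f‖ := by
  rw [← norm_toBCF_eq_norm]
  exact f.toBCF.norm_coe_le_norm x

lemma norm_le {f : C₀(X, E)} {C : ℝ} (hC : 0 ≤ C) : ‖f‖ ≤ C ↔ ∀ x, ‖f x‖ ≤ C := by
  rw [← norm_toBCF_eq_norm]
  exact BoundedContinuousFunction.norm_le hC

variable (𝕜 : Type*) [NormedField 𝕜] [NormedSpace 𝕜 E]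

noncomputable def evalCLM (x : X) : C₀(X, E) →L[𝕜] E :=
  LinearMap.mkContinuous
    { toFun := fun f => f x
      map_add' := fun _ _ => rfl
      map_smul' := fun _ _ => rfl }
    1 fun f => by simpa using norm_apply_le f x

@[simp]
lemma evalCLM_apply (x : X) (f : C₀(X, E)) : evalCLM 𝕜 x f = f x := rfl

end Norm

lemma tendsto_atTop_nat (y : C₀(ℕ, ℝ)) : Tendsto y atTop (𝓝 0) := by
  simpa [cocompact_eq_cofinite, Nat.cofinite_eq_atTop] using zero_at_infty y

noncomputable def ofTendsto (y : ℕ → ℝ) (hy : Tendsto y atTop (𝓝 0)) : C₀(ℕ, ℝ) where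
  toFun := y
  continuous_toFun := continuous_of_discreteTopology
  zero_at_infty' := by rwa [cocompact_eq_cofinite, Nat.cofinite_eq_atTop]

@[simp]
lemma ofTendsto_apply (y : ℕ → ℝ) (hy : Tendsto y atTop (𝓝 0)) (k : ℕ) :
    ofTendsto y hy k = y k := rfl

noncomputable def single (k : ℕ) : C₀(ℕ, ℝ) :=
  ofTendsto (Pi.single k 1) <| tendsto_const_nhds.congr' <| by
    filter_upwards [eventually_gt_atTop k] with j hj
    simp [hj.ne']

lemma single_apply (k j : ℕ) : single k j = if j = k then 1 else 0 := by
  simp only [single, ofTendsto_apply, Pi.single_apply]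

lemma sum_abs_apply_single_le_opNorm (f : C₀(ℕ, ℝ) →L[ℝ] ℝ) (m : ℕ) :
    ∑ k ∈ range m, |f (single k)| ≤ ‖f‖ := by
  set s : C₀(ℕ, ℝ) := ∑ k ∈ range m, (SignType.sign (f (single k)) : ℝ) • single k
  have hs : ‖s‖ ≤ 1 := by
    refine (norm_le zero_le_one).mpr fun j => ?_
    rw [← evalCLM_apply ℝ j s]
    simp only [s, map_sum, map_smul, evalCLM_apply, single_apply, smul_eq_mul, mul_ite, mul_one,
      mul_zero, sum_ite_eq, mem_range]
    split_ifs
    · rcases SignType.trichotomy (SignType.sign (f (single j))) with h | h | h <;> simp [h]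
    · simp
  calc ∑ k ∈ range m, |f (single k)| = f s := by
        simp [s, map_sum, map_smul, sign_mul_self]
    _ ≤ ‖f‖ * ‖s‖ := (le_abs_self _).trans (f.le_opNorm s)
    _ ≤ ‖f‖ := mul_le_of_le_one_right (norm_nonneg f) hs

end ZeroAtInftyContinuousMap

/-- The sufficiency half of the Silverman–Toeplitz theorem. -/
lemma tendsto_sum_range_mul_of_tendsto_zero {T : ℕ → ℕ → ℝ} {y : ℕ → ℝ} {D : ℝ}
    (hT : ∀ j, Tendsto (fun m => T m j) atTop (𝓝 0))
    (hD : ∀ m, ∑ j ∈ range m, |T m j| ≤ D) (hy : Tendsto y atTop (𝓝 0)) :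
    Tendsto (fun m => ∑ j ∈ range m, T m j * y j) atTop (𝓝 0) := by
  have hD0 : 0 ≤ D := by simpa using hD 0
  refine NormedAddGroup.tendsto_nhds_zero.mpr fun ε hε => ?_
  set δ := ε / (2 * (D + 1))
  have hDδ : D * δ < ε / 2 := by
    simp only [δ]
    rw [mul_div_assoc', div_lt_div_iff₀ (by positivity) two_pos]
    nlinarith
  obtain ⟨N, hN⟩ := eventually_atTop.mp (NormedAddGroup.tendsto_nhds_zero.mp hy δ (by positivity))
  have hhead : Tendsto (fun m => ∑ j ∈ range N, T m j * y j) atTop (𝓝 0) := by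
    simpa using tendsto_finsetSum (range N) fun j _ => (hT j).mul_const (y j)
  filter_upwards [NormedAddGroup.tendsto_nhds_zero.mp hhead (ε / 2) (half_pos hε),
    eventually_ge_atTop N] with m hhead_small hNm
  have htail : ‖∑ j ∈ Ico N m, T m j * y j‖ ≤ D * δ := calc
    _ ≤ ∑ j ∈ Ico N m, |T m j| * δ := norm_sum_le_of_le _ fun j hj => by
        rw [norm_mul, Real.norm_eq_abs]
        exact mul_le_mul_of_nonneg_left (hN j (mem_Ico.mp hj).1).le (abs_nonneg _)
    _ ≤ D * δ := by
        rw [← sum_mul]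
        refine mul_le_mul_of_nonneg_right ((sum_le_sum_of_subset_of_nonneg ?_ ?_).trans (hD m))
          (by positivity)
        · exact fun j hj => mem_range.mpr (mem_Ico.mp hj).2
        · exact fun _ _ _ => abs_nonneg _
  rw [← sum_range_add_sum_Ico _ hNm]
  linarith [norm_add_le (∑ j ∈ range N, T m j * y j) (∑ j ∈ Ico N m, T m j * y j)]

lemma sum_range_abs_mul_le {c y : ℕ → ℝ} {M Y : ℝ} (hc : ∀ m, ∑ j ∈ range m, |c j| ≤ M)
    (hY : ∀ j, |y j| ≤ Y) (m : ℕ) : ∑ j ∈ range m, |c j * y j| ≤ M * Y := by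
  have hY0 : 0 ≤ Y := (abs_nonneg _).trans (hY 0)
  calc ∑ j ∈ range m, |c j * y j| ≤ ∑ j ∈ range m, |c j| * Y :=
        sum_le_sum fun j _ => by rw [abs_mul]; exact mul_le_mul_of_nonneg_left (hY j) (abs_nonneg _)
    _ ≤ M * Y := by rw [← sum_mul]; exact mul_le_mul_of_nonneg_right (hc m) hY0

lemma exists_seriesHasSum_of_hat {α : ℝ} (hα : ∀ m : ℤ, α ≠ m) (a Ahat : ℕ → ℕ → ℝ) {M : ℝ}
    (hAhat : ∀ n k, Tendsto (hatPartialSum α (a n) k) atTop (𝓝 (Ahat n k)))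
    (hM : ∀ n m, ∑ k ∈ range m, |Ahat n k| ≤ M)
    (hW : ∀ n, ∃ D, ∀ m, ∑ k ∈ range (m + 1), |Ahat n k - hatPartialSum α (a n) k m| ≤ D)
    {x : ℕ → ℝ} (hx : memC0Delta α x) :
    ∃ z : ℕ → ℝ, (∀ n, SeriesHasSum (fun k => a n k * x k) (z n)) ∧ ∃ C, ∀ n, |z n| ≤ C := by
  set y := fracDeltaSeq α x
  obtain ⟨Y, hY⟩ := hx.norm.bddAbove_range
  have habs : ∀ n m, ∑ j ∈ range m, |Ahat n j * y j| ≤ M * Y :=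
    fun n => sum_range_abs_mul_le (hM n) fun j => hY (Set.mem_range_self j)
  have hsum : ∀ n, Summable fun j => |Ahat n j * y j| :=
    fun n => summable_of_sum_range_le (fun _ => abs_nonneg _) (habs n)
  refine ⟨fun n => ∑' j, Ahat n j * y j, fun n => ?_, M * Y, fun n => ?_⟩
  · obtain ⟨D, hD⟩ := hW n
    have hpartial : ∀ m, ∑ k ∈ range m, a n k * x k = ∑ j ∈ range m, Ahat n j * y j
        - ∑ j ∈ range m, (Ahat n j - hatPartialSum α (a n) j m) * y j := fun m => by
      conv_lhs => rw [← fracDeltaSeq_neg_fracDeltaSeq hα x, sum_mul_fracDeltaSeq_neg]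
      rw [← sum_sub_distrib]
      exact sum_congr rfl fun _ _ => by ring
    have hrest := tendsto_sum_range_mul_of_tendsto_zero
      (T := fun m j => Ahat n j - hatPartialSum α (a n) j m)
      (fun j => by simpa using (hAhat n j).const_sub (Ahat n j))
      (fun m => (sum_le_sum_of_subset_of_nonneg (range_subset_range.mpr m.le_succ)
        fun _ _ _ => abs_nonneg _).trans (hD m)) hx
    simpa [SeriesHasSum, hpartial] using (hsum n).of_abs.hasSum.tendsto_sum_nat.sub hrest
  · calc |∑' j, Ahat n j * y j| ≤ ∑' j, |Ahat n j * y j| := by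
          simpa only [Real.norm_eq_abs] using
            norm_tsum_le_tsum_norm (f := fun j => Ahat n j * y j)
              (by simpa only [Real.norm_eq_abs] using hsum n)
      _ ≤ M * Y := Real.tsum_le_of_sum_range_le (f := fun j => |Ahat n j * y j|)
          (fun _ => abs_nonneg _) (habs n)

open ZeroAtInfty ZeroAtInftyContinuousMap in
lemma exists_hat_of_maps_c0Delta {α : ℝ} (hα : ∀ m : ℤ, α ≠ m) (a : ℕ → ℕ → ℝ)
    (H : ∀ x : ℕ → ℝ, memC0Delta α x →
      ∃ z : ℕ → ℝ, (∀ n, SeriesHasSum (fun k => a n k * x k) (z n)) ∧ ∃ C : ℝ, ∀ n, |z n| ≤ C) :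
    ∃ Ahat : ℕ → ℕ → ℝ, (∀ n k, Tendsto (hatPartialSum α (a n) k) atTop (𝓝 (Ahat n k))) ∧
      (∃ M, ∀ n m, ∑ k ∈ range m, |Ahat n k| ≤ M) ∧
      ∀ n, ∃ D, ∀ m, ∑ k ∈ range (m + 1), |Ahat n k - hatPartialSum α (a n) k m| ≤ D := by
  choose z hz hzC using fun y : C₀(ℕ, ℝ) =>
    H _ (memC0Delta_fracDeltaSeq_neg hα y.tendsto_atTop_nat)
  let f (n m : ℕ) : C₀(ℕ, ℝ) →L[ℝ] ℝ :=
    ∑ j ∈ range m, hatPartialSum α (a n) j m • evalCLM ℝ j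
  have hf : ∀ n y, Tendsto (fun m => f n m y) atTop (𝓝 (z y n)) := fun n y => by
    simpa [f, SeriesHasSum, sum_mul_fracDeltaSeq_neg] using hz y n
  have hf_single : ∀ n m k, f n m (single k) = hatPartialSum α (a n) k m := fun n m k => by
    simp only [f, FunLike.coe_sum, Finset.sum_apply, FunLike.coe_smul,
      Pi.smul_apply, evalCLM_apply, single_apply, smul_eq_mul, mul_ite, mul_one, mul_zero,
      sum_ite_eq', mem_range]
    split_ifs with hkm
    · rfl
    · exact (hatPartialSum_of_le α (a n) (not_lt.mp hkm)).symm
  choose C hC using fun n => banach_steinhaus (g := f n) fun y =>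
    let ⟨C, hC⟩ := (hf n y).norm.bddAbove_range
    ⟨C, fun m => hC (Set.mem_range_self m)⟩
  let h (n : ℕ) := continuousLinearMapOfTendsto (f n) (tendsto_pi_nhds.mpr (hf n))
  have happly : ∀ n y, h n y = z y n := fun _ _ => rfl
  obtain ⟨M, hM⟩ := banach_steinhaus (g := h) fun y => by
    simpa only [happly, Real.norm_eq_abs] using hzC y
  have hsection : ∀ n m p, ∑ k ∈ range p, |hatPartialSum α (a n) k m| ≤ C n := fun n m p => by
    simpa only [hf_single] using (sum_abs_apply_single_le_opNorm (f n m) p).trans (hC n m)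
  have hlimit : ∀ n p, ∑ k ∈ range p, |h n (single k)| ≤ M :=
    fun n p => (sum_abs_apply_single_le_opNorm (h n) p).trans (hM n)
  refine ⟨fun n k => h n (single k), fun n k => ?_, ⟨M, hlimit⟩, fun n => ⟨M + C n, fun m => ?_⟩⟩
  · simpa only [hf_single, happly] using hf n (single k)
  · calc ∑ k ∈ range (m + 1), |h n (single k) - hatPartialSum α (a n) k m|
        ≤ ∑ k ∈ range (m + 1), (|h n (single k)| + |hatPartialSum α (a n) k m|) :=
          sum_le_sum fun _ _ => abs_sub _ _
      _ ≤ M + C n := by rw [sum_add_distrib]; exact add_le_add (hlimit n _) (hsection n m _)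

/-- Characterization of `A ∈ (c₀(Δ^(α)), ℓ∞)`: `A` maps `c₀(Δ^(α))` into `ℓ∞` iff the
series defining `â_{nk}` and `w^{(A_n)}_{mk}` converge, `sup_n ∑_k |â_{nk}| < ∞` and,
for every `n`, `sup_m ∑_{k=0}^m |w^{(A_n)}_{mk}| < ∞`. -/
theorem matrix_c0Delta_into_linf (α : ℝ) (hα : ∀ m : ℤ, α ≠ (m : ℝ))
    (a : ℕ → ℕ → ℝ) :
    (∀ x : ℕ → ℝ, memC0Delta α x →
      ∃ y : ℕ → ℝ, (∀ n, SeriesHasSum (fun k => a n k * x k) (y n)) ∧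
        ∃ C : ℝ, ∀ n, |y n| ≤ C) ↔
    (∃ Ahat : ℕ → ℕ → ℝ,
      (∀ n k, SeriesHasSum (fun j => fracDelta (-α) (k + j) k * a n (k + j)) (Ahat n k)) ∧
      (∃ C : ℝ, ∀ n m, ∑ k ∈ Finset.range m, |Ahat n k| ≤ C)) ∧
    (∃ W : ℕ → ℕ → ℕ → ℝ,
      (∀ n m k, k ≤ m →
        SeriesHasSum (fun j => fracDelta (-α) (m + j) k * a n (m + j)) (W n m k)) ∧
      (∀ n, ∃ C : ℝ, ∀ m, ∑ k ∈ Finset.range (m + 1), |W n m k| ≤ C)) := by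
  constructor
  · intro H
    obtain ⟨Ahat, hAhat, hM, hW⟩ := exists_hat_of_maps_c0Delta hα a H
    refine ⟨⟨Ahat, fun n k => (seriesHasSum_hat_iff α (a n) k).mpr (hAhat n k), hM⟩,
      fun n m k => Ahat n k - hatPartialSum α (a n) k m, fun n m k _ => ?_, hW⟩
    exact (seriesHasSum_w_iff α (a n) k m).mpr (by rw [sub_add_cancel]; exact hAhat n k)
  · rintro ⟨⟨Ahat, hAs, M, hM⟩, W, hWs, hWb⟩ x hx
    have hAhat n k := (seriesHasSum_hat_iff α (a n) k).mp (hAs n k)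
    have hW : ∀ n m k, k ≤ m → W n m k = Ahat n k - hatPartialSum α (a n) k m :=
      fun n m k hkm => eq_sub_of_add_eq <|
        tendsto_nhds_unique ((seriesHasSum_w_iff α (a n) k m).mp (hWs n m k hkm)) (hAhat n k)
    refine exists_seriesHasSum_of_hat hα a Ahat hAhat hM (fun n => ?_) hx
    obtain ⟨D, hD⟩ := hWb n
    exact ⟨D, fun m => (sum_congr rfl fun k hk => by
      rw [hW n m k (mem_range_succ_iff.mp hk)]).trans_le (hD m)⟩
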